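/- Let n ≥ 3 and W the n × n Wielandt matrix. Then the least positive integer k such that every entry of column n-1 of W^k is positive equals n^2 - 3n + 3. -/

import Mathlib

/-!
Positive entries of column `n - 2` of `W ^ k` are walks of length `k` into `n - 2`. A walk from
`u` through `0` has length `u + 1 + c (n - 1) + r` with `r ≤ c + 1`: it makes `c` round trips
through `0`, of which `r` use the longer cycle or the final detour through `n - 1`. For
`c ≥ n - 3` every residue modulo `n - 1` occurs, which serves all `n` starting points once
`k = (n - 1) (n - 2) + 1`. For smaller `k`, some `u < n` has `k - u = q (n - 1)` with
`q ≤ n - 3`, and no walk from that `u` has length `k`: `c < q` round trips fall short, `c ≥ q`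
overshoot.
-/

/-- The `n × n` Wielandt matrix: `W i j = 1` iff (`i ≥ 2` and `j = i - 1`) or
(`i = 1` and `j ∈ {n-1, n}`), written here with 0-based indexing via `Fin n`. -/
def wielandt (n : ℕ) : Matrix (Fin n) (Fin n) ℕ := fun i j =>
  if (1 ≤ i.val ∧ j.val + 1 = i.val) ∨ (i.val = 0 ∧ (j.val = n - 2 ∨ j.val = n - 1))
  then 1 else 0

theorem Matrix.pow_succ_apply_pos_iff {ι R : Type*} [Fintype ι] [DecidableEq ι] [Semiring R]
    [PartialOrder R] [CanonicallyOrderedAdd R] [NoZeroDivisors R]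
    (A : Matrix ι ι R) (k : ℕ) (i j : ι) :
    0 < (A ^ (k + 1)) i j ↔ ∃ l, 0 < A i l ∧ 0 < (A ^ k) l j := by
  simp only [pow_succ', Matrix.mul_apply, pos_iff_ne_zero, ne_eq, Finset.sum_eq_zero_iff,
    Finset.mem_univ, true_implies, mul_eq_zero, not_forall, not_or]

section Wielandt

variable {n : ℕ}

theorem wielandt_apply_pos_of_val_eq_succ {i : Fin n} {u : ℕ} (hi : i.val = u + 1) (j : Fin n) :
    0 < wielandt n i j ↔ j.val = u := by
  unfold wielandt
  split_ifs <;> simp_all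

theorem wielandt_apply_pos_of_val_eq_zero {i : Fin n} (hi : i.val = 0) (j : Fin n) :
    0 < wielandt n i j ↔ j.val = n - 2 ∨ j.val = n - 1 := by
  unfold wielandt
  split_ifs <;> simp_all

/-- A walk from `u` to `n - 2` that passes through `0` first descends to `0` in `u` steps, then
goes around the cycles of lengths `n` and `n - 1` (`a n + b (n - 1) = (a + b) (n - 1) + a`) and
ends with `0 → n - 2` or `0 → n - 1 → n - 2`; the only other walks are the trivial ones from
`n - 2` and `n - 1`. -/
def IsWielandtWalkLength (n u k : ℕ) : Prop :=
  u + 2 = k + n ∨ ∃ c r, r ≤ c + 1 ∧ k = u + 1 + c * (n - 1) + r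

theorem isWielandtWalkLength_zero_right (hn : 2 ≤ n) (u : ℕ) :
    IsWielandtWalkLength n u 0 ↔ u = n - 2 := by
  unfold IsWielandtWalkLength
  constructor
  · rintro (h | ⟨c, r, -, h⟩) <;> omega
  · intro h
    exact Or.inl (by omega)

theorem isWielandtWalkLength_succ_succ (u k : ℕ) :
    IsWielandtWalkLength n (u + 1) (k + 1) ↔ IsWielandtWalkLength n u k := by
  unfold IsWielandtWalkLength
  constructor <;> rintro (h | ⟨c, r, hr, h⟩)
  all_goals first | exact Or.inl (by omega) | exact Or.inr ⟨c, r, hr, by omega⟩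

theorem isWielandtWalkLength_zero_succ (hn : 2 ≤ n) (k : ℕ) :
    IsWielandtWalkLength n 0 (k + 1) ↔
      IsWielandtWalkLength n (n - 2) k ∨ IsWielandtWalkLength n (n - 1) k := by
  unfold IsWielandtWalkLength
  constructor
  · rintro (h | ⟨_ | c, r, hr, hk⟩)
    · omega
    · omega
    · have hc : (c + 1) * (n - 1) = c * (n - 1) + (n - 1) := by ring
      rcases Nat.lt_or_ge r (c + 2) with hr' | hr'
      · exact Or.inl (Or.inr ⟨c, r, by omega, by omega⟩)
      · exact Or.inr (Or.inr ⟨c, c + 1, le_rfl, by omega⟩)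
  · have hc (c : ℕ) : (c + 1) * (n - 1) = c * (n - 1) + (n - 1) := by ring
    rintro ((h | ⟨c, r, hr, hk⟩) | (h | ⟨c, r, hr, hk⟩))
    · exact Or.inr ⟨0, 0, by omega, by omega⟩
    · exact Or.inr ⟨c + 1, r, by omega, by rw [hc]; omega⟩
    · exact Or.inr ⟨0, 1, by omega, by omega⟩
    · exact Or.inr ⟨c + 1, r + 1, by omega, by rw [hc]; omega⟩

theorem wielandt_pow_apply_pos_iff (hn : 2 ≤ n) (k : ℕ) (u : Fin n) :
    0 < (wielandt n ^ k) u ⟨n - 2, by omega⟩ ↔ IsWielandtWalkLength n u k := by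
  induction k generalizing u with
  | zero =>
    rw [isWielandtWalkLength_zero_right hn, pow_zero, Matrix.one_apply]
    split_ifs <;> simp_all [Fin.ext_iff]
  | succ k ih =>
    rw [Matrix.pow_succ_apply_pos_iff]
    obtain ⟨_ | u, hu⟩ := u
    · simp only [wielandt_apply_pos_of_val_eq_zero (i := ⟨0, hu⟩) rfl,
        isWielandtWalkLength_zero_succ hn]
      constructor
      · rintro ⟨l, hl | hl, hpos⟩
        · exact Or.inl (hl ▸ (ih l).1 hpos)
        · exact Or.inr (hl ▸ (ih l).1 hpos)
      · rintro (h | h)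
        · exact ⟨⟨n - 2, by omega⟩, Or.inl rfl, (ih _).2 h⟩
        · exact ⟨⟨n - 1, by omega⟩, Or.inr rfl, (ih _).2 h⟩
    · simp only [wielandt_apply_pos_of_val_eq_succ (i := ⟨u + 1, hu⟩) rfl,
        isWielandtWalkLength_succ_succ]
      constructor
      · rintro ⟨l, hl, hpos⟩
        exact hl ▸ (ih l).1 hpos
      · exact fun h ↦ ⟨⟨u, by omega⟩, rfl, (ih _).2 h⟩

theorem isWielandtWalkLength_of_le {u k : ℕ} (hn : 3 ≤ n) (hu : u < n)
    (hk : (n - 1) * (n - 2) + 1 ≤ k) : IsWielandtWalkLength n u k := by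
  obtain ⟨m, rfl⟩ : ∃ m, n = m + 3 := ⟨n - 3, by omega⟩
  unfold IsWielandtWalkLength
  simp only [show m + 3 - 1 = m + 2 by omega, show m + 3 - 2 = m + 1 by omega] at hk ⊢
  have hsq : (m + 2) * (m + 1) = m * (m + 2) + (m + 2) := by ring
  set t := k - u - 1
  have hq : m ≤ t / (m + 2) := (Nat.le_div_iff_mul_le (by omega)).2 (by omega)
  have hr : t % (m + 2) < m + 2 := Nat.mod_lt _ (by omega)
  have ht : t / (m + 2) * (m + 2) + t % (m + 2) = t := Nat.div_add_mod' t (m + 2)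
  exact Or.inr ⟨t / (m + 2), t % (m + 2), by omega, by omega⟩

theorem not_isWielandtWalkLength_add_mul {u q : ℕ} (hn : 3 ≤ n) (hqn : q + 3 ≤ n) :
    ¬ IsWielandtWalkLength n u (u + q * (n - 1)) := by
  rintro (h | ⟨c, r, hr, h⟩)
  · omega
  · rcases Nat.lt_or_ge c q with hcq | hcq
    · have h1 : (c + 1) * (n - 1) ≤ q * (n - 1) := Nat.mul_le_mul_right _ hcq
      have h2 : (c + 1) * (n - 1) = c * (n - 1) + (n - 1) := by ring
      omega
    · have : q * (n - 1) ≤ c * (n - 1) := Nat.mul_le_mul_right _ hcq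
      omega

theorem exists_not_isWielandtWalkLength {k : ℕ} (hn : 3 ≤ n) (hk : k ≤ (n - 1) * (n - 2)) :
    ∃ u < n, ¬ IsWielandtWalkLength n u k := by
  set q := (k - 1) / (n - 1)
  have hpos : 0 < (n - 2) * (n - 1) := Nat.mul_pos (by omega) (by omega)
  have hq : q < n - 2 := (Nat.div_lt_iff_lt_mul (by omega)).2 (by rw [mul_comm] at hk; omega)
  have hle : q * (n - 1) ≤ k - 1 := Nat.div_mul_le_self _ _
  have hlt : k - 1 < q * (n - 1) + (n - 1) := by
    have := Nat.lt_div_mul_add (a := k - 1) (b := n - 1) (by omega)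
    omega
  refine ⟨k - q * (n - 1), by omega, ?_⟩
  have h := not_isWielandtWalkLength_add_mul (u := k - q * (n - 1)) (q := q) hn (by omega)
  rwa [Nat.sub_add_cancel (by omega)] at h

end Wielandt

/-- The least positive `k` such that every entry of column `n-1` of `W^k` is positive
is `n^2 - 3n + 3`. -/
theorem wielandt_local_exponent (n : ℕ) (hn : 3 ≤ n) :
    IsLeast {k : ℕ | 0 < k ∧
        ∀ u : Fin n, 0 < (wielandt n ^ k) u ⟨n - 2, by omega⟩}
      (n ^ 2 - 3 * n + 3) := by
  have hexp : n ^ 2 - 3 * n + 3 = (n - 1) * (n - 2) + 1 := by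
    zify [show 3 * n ≤ n ^ 2 by nlinarith, show 1 ≤ n by omega, show 2 ≤ n by omega]
    ring
  rw [hexp]
  refine ⟨⟨Nat.succ_pos _, fun u ↦ ?_⟩, fun k ⟨_, hk⟩ ↦ ?_⟩
  · exact (wielandt_pow_apply_pos_iff (by omega) _ u).2 (isWielandtWalkLength_of_le hn u.isLt le_rfl)
  · by_contra! hlt
    obtain ⟨u, hu, hwalk⟩ := exists_not_isWielandtWalkLength hn (Nat.lt_succ_iff.1 hlt)
    exact hwalk ((wielandt_pow_apply_pos_iff (by omega) k ⟨u, hu⟩).1 (hk ⟨u, hu⟩))
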